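/- The numeral system b′ defined by b′₀ = b₁, b′₁ = b₀, and b′ₙ = bₙ for n ≥ 2 possesses no closed λ-term for Successor, no closed λ-term for Predecessor, and no closed λ-term for Zero Test. -/

import Mathlib

/-- Untyped λ-terms in de Bruijn notation. -/
inductive Lam : Type
  | var : ℕ → Lam
  | app : Lam → Lam → Lam
  | lam : Lam → Lam
  deriving DecidableEq

namespace Lam

/-- Shift by one the free variables with index ≥ `d`. -/
def lift (d : ℕ) : Lam → Lam
  | var n => if n < d then var n else var (n + 1)
  | app M N => app (lift d M) (lift d N)
  | lam M => lam (lift (d + 1) M)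

/-- Capture-avoiding substitution of `N` for the free variable of index `n`. -/
def subst : Lam → ℕ → Lam → Lam
  | var m, n, N => if m = n then N else if n < m then var (m - 1) else var m
  | app M₁ M₂, n, N => app (subst M₁ n N) (subst M₂ n N)
  | lam M, n, N => lam (subst M (n + 1) (lift 0 N))

/-- One-step β-reduction (contraction of a β-redex anywhere in the term). -/
inductive Step : Lam → Lam → Prop
  | beta (M N : Lam) : Step (app (lam M) N) (subst M 0 N)
  | appL {M M' : Lam} (N : Lam) : Step M M' → Step (app M N) (app M' N)
  | appR (M : Lam) {N N' : Lam} : Step N N' → Step (app M N) (app M N')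
  | lam {M M' : Lam} : Step M M' → Step (Lam.lam M) (Lam.lam M')

/-- β-equivalence: the equivalence relation generated by one-step β-reduction. -/
def BetaEq : Lam → Lam → Prop := Relation.EqvGen Step

/-- The variable of index `n` occurs free in the term. -/
def HasFree : Lam → ℕ → Prop
  | var m, n => m = n
  | app M N, n => HasFree M n ∨ HasFree N n
  | lam M, n => HasFree M (n + 1)

/-- A term is closed if it has no free variables. -/
def Closed (M : Lam) : Prop := ∀ n, ¬ HasFree M n

/-- A term is β-normal: it contains no β-redex. -/
def IsBetaNormal : Lam → Prop
  | app (lam _) _ => False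
  | app M N => IsBetaNormal M ∧ IsBetaNormal N
  | lam M => IsBetaNormal M
  | var _ => True

/-- A term is βη-normal: it contains no β-redex and no η-redex
`λx.(M x)` with `x` not free in `M`. -/
def IsBetaEtaNormal : Lam → Prop
  | app (lam _) _ => False
  | app M N => IsBetaEtaNormal M ∧ IsBetaEtaNormal N
  | lam (app M (var 0)) => HasFree M 0 ∧ IsBetaEtaNormal (app M (var 0))
  | lam M => IsBetaEtaNormal M
  | var _ => True

/-- `I = λx.x`. -/
def I : Lam := lam (var 0)

/-- `T = λxλy.x`. -/
def T : Lam := lam (lam (var 1))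

/-- `F = λxλy.y`. -/
def F : Lam := lam (lam (var 0))

/-- The pair `<M,N> = λx.(x M N)` (the binder shifts the free variables of `M,N`). -/
def pair (M N : Lam) : Lam := lam (app (app (var 0) (lift 0 M)) (lift 0 N))

end Lam

/-- The numeral system `a` : `aₙ = λx₁…λxₙ.I` (so `a₀ = I`). -/
def Lam.sysA : ℕ → Lam
  | 0 => Lam.I
  | n + 1 => Lam.lam (Lam.sysA n)

/-- The numeral system `b` : `b₀ = <T, I>` and `bₙ = <F, a_{n-1}>` for `n ≥ 1`. -/
def Lam.sysB : ℕ → Lam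
  | 0 => Lam.pair Lam.T Lam.I
  | n + 1 => Lam.pair Lam.F (Lam.sysA n)

/-- The numeral system `b′` : `b′₀ = b₁`, `b′₁ = b₀` and `b′ₙ = bₙ` for `n ≥ 2`. -/
def Lam.sysB' : ℕ → Lam
  | 0 => Lam.sysB 1
  | 1 => Lam.sysB 0
  | n + 2 => Lam.sysB (n + 2)

/-! Each of the three operators would give a term `G` with `G a₀ =β T` and `G aₙ₊₁ =β F`
(take `G x` to be `S ⟨F, x⟩ T`, `P ⟨F, λy.x⟩ T` and `Z ⟨F, x⟩` respectively), so it suffices that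
not even an open term is a zero test for the numerals `a`. As `G a₁` has the normal form `F`,
standardization shows that `G x` has a head normal form `λy₁…yₖ. z N₁ … Nₘ`. If `z` is `x`, then
`G aₘ₊₂ ↠ aₖ₊₂ ≠ F`. Otherwise every reduct of every `G aₙ` has head variable `z`, but the normal
forms `T` and `F` have different head variables. -/

namespace Lam

theorem lift_lift_of_le (M : Lam) {c d : ℕ} (h : c ≤ d) :
    lift c (lift d M) = lift (d + 1) (lift c M) := by
  induction M generalizing c d with
  | var n => simp only [lift]; split_ifs <;> simp only [lift] <;> split_ifs <;> grind
  | app M N ihM ihN => simp [lift, ihM h, ihN h]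
  | lam M ih => simp [lift, ih (Nat.succ_le_succ h)]

theorem lift_subst_of_le (M : Lam) {c n : ℕ} (N : Lam) (h : c ≤ n) :
    lift c (subst M n N) = subst (lift c M) (n + 1) (lift c N) := by
  induction M generalizing c n N with
  | var m => simp only [subst, lift]; split_ifs <;> simp only [subst, lift] <;> split_ifs <;> grind
  | app M N ihM ihN => simp [subst, lift, ihM _ h, ihN _ h]
  | lam M ih =>
    simp only [subst, lift, ih _ (Nat.succ_le_succ h), lift_lift_of_le N (Nat.zero_le c)]

theorem lift_subst_of_ge (M : Lam) {c n : ℕ} (N : Lam) (h : n ≤ c) :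
    lift c (subst M n N) = subst (lift (c + 1) M) n (lift c N) := by
  induction M generalizing c n N with
  | var m => simp only [subst, lift]; split_ifs <;> simp only [subst, lift] <;> split_ifs <;> grind
  | app M N ihM ihN => simp [subst, lift, ihM _ h, ihN _ h]
  | lam M ih =>
    simp only [subst, lift, ih _ (Nat.succ_le_succ h), lift_lift_of_le N (Nat.zero_le c)]

@[simp]
theorem subst_lift (M : Lam) (n : ℕ) (N : Lam) : subst (lift n M) n N = M := by
  induction M generalizing n N with
  | var m => simp only [lift]; split_ifs <;> simp only [subst] <;> split_ifs <;> grind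
  | app M N ihM ihN => simp [lift, subst, ihM, ihN]
  | lam M ih => simp [lift, subst, ih]

theorem subst_subst_of_le (M : Lam) {i n : ℕ} (N P : Lam) (h : i ≤ n) :
    subst (subst M i N) n P = subst (subst M (n + 1) (lift i P)) i (subst N n P) := by
  induction M generalizing i n N P with
  | var m =>
    by_cases hm : m = n + 1
    · subst hm
      simp only [subst, if_neg (show n + 1 ≠ i by omega), if_pos (show i < n + 1 by omega),
        Nat.add_sub_cancel, if_true, subst_lift]
    · simp only [subst]; split_ifs <;> simp only [subst] <;> split_ifs <;> grind
  | app A B ihA ihB => simp [subst, ihA _ _ h, ihB _ _ h]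
  | lam A ih =>
    simp only [subst, ih _ _ (Nat.succ_le_succ h), lift_subst_of_le N P (Nat.zero_le n),
      lift_lift_of_le P (Nat.zero_le i)]

theorem subst_pair (M N : Lam) (n : ℕ) (A : Lam) :
    subst (pair M N) n A = pair (subst M n A) (subst N n A) := by
  simp [pair, subst, lift_subst_of_le _ _ (Nat.zero_le n)]

@[simp]
theorem lift_sysA (d n : ℕ) : lift d (sysA n) = sysA n := by
  induction n generalizing d with
  | zero => simp [sysA, I, lift]
  | succ n ih => simp [sysA, lift, ih]

@[simp]
theorem subst_sysA (n e : ℕ) (N : Lam) : subst (sysA n) e N = sysA n := by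
  induction n generalizing e N with
  | zero => simp [sysA, I, subst]
  | succ n ih => simp [sysA, subst, ih]

/-! ### Confluence -/

def Red : Lam → Lam → Prop := Relation.ReflTransGen Step

theorem Red.refl (M : Lam) : Red M M := Relation.ReflTransGen.refl

theorem Red.trans {M N P : Lam} (h₁ : Red M N) (h₂ : Red N P) : Red M P :=
  Relation.ReflTransGen.trans h₁ h₂

theorem Red.single {M N : Lam} (h : Step M N) : Red M N := Relation.ReflTransGen.single h

theorem Red.appL {M M' : Lam} (N : Lam) (h : Red M M') : Red (app M N) (app M' N) :=
  Relation.ReflTransGen.lift (fun X => app X N) (fun _ _ => Step.appL N) _ _ h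

theorem Red.appR (M : Lam) {N N' : Lam} (h : Red N N') : Red (app M N) (app M N') :=
  Relation.ReflTransGen.lift (app M) (fun _ _ => Step.appR M) _ _ h

theorem Red.lam {M M' : Lam} (h : Red M M') : Red (lam M) (lam M') :=
  Relation.ReflTransGen.lift Lam.lam (fun _ _ => Step.lam) _ _ h

theorem Step.subst {M M' : Lam} (h : Step M M') (n : ℕ) (N : Lam) :
    Step (subst M n N) (subst M' n N) := by
  induction h generalizing n N with
  | beta A B => rw [subst_subst_of_le A B N (Nat.zero_le n)]; exact Step.beta _ _
  | appL N _ ih => exact Step.appL _ (ih n _)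
  | appR M _ ih => exact Step.appR _ (ih n _)
  | lam _ ih => exact Step.lam (ih (n + 1) _)

theorem Step.beta_of_subst_eq {M N P : Lam} (h : Lam.subst M 0 N = P) :
    Step (app (Lam.lam M) N) P :=
  h ▸ Step.beta M N

theorem Red.subst {M M' : Lam} (h : Red M M') (n : ℕ) (N : Lam) :
    Red (subst M n N) (subst M' n N) :=
  Relation.ReflTransGen.lift (Lam.subst · n N) (fun _ _ hs => hs.subst n N) _ _ h

inductive Par : Lam → Lam → Prop
  | var (n : ℕ) : Par (var n) (var n)
  | app {M M' N N' : Lam} : Par M M' → Par N N' → Par (app M N) (app M' N')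
  | lam {M M' : Lam} : Par M M' → Par (lam M) (lam M')
  | beta {M M' N N' : Lam} : Par M M' → Par N N' → Par (app (lam M) N) (subst M' 0 N')

theorem Par.refl (M : Lam) : Par M M := by
  induction M with
  | var n => exact Par.var n
  | app M N ihM ihN => exact Par.app ihM ihN
  | lam M ih => exact Par.lam ih

theorem Par.of_step {M N : Lam} (h : Step M N) : Par M N := by
  induction h with
  | beta A B => exact Par.beta (Par.refl A) (Par.refl B)
  | appL N _ ih => exact Par.app ih (Par.refl N)
  | appR M _ ih => exact Par.app (Par.refl M) ih
  | lam _ ih => exact Par.lam ih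

theorem Par.red {M N : Lam} (h : Par M N) : Red M N := by
  induction h with
  | var n => exact Red.refl _
  | app _ _ ih₁ ih₂ => exact (Red.appL _ ih₁).trans (Red.appR _ ih₂)
  | lam _ ih => exact Red.lam ih
  | beta _ _ ih₁ ih₂ =>
    exact ((Red.appL _ (Red.lam ih₁)).trans (Red.appR _ ih₂)).trans (Red.single (Step.beta _ _))

theorem Par.lift {M N : Lam} (h : Par M N) (d : ℕ) : Par (lift d M) (lift d N) := by
  induction h generalizing d with
  | var n => exact Par.refl _
  | app _ _ ih₁ ih₂ => exact Par.app (ih₁ d) (ih₂ d)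
  | lam _ ih => exact Par.lam (ih (d + 1))
  | beta _ _ ih₁ ih₂ =>
    rw [lift_subst_of_ge _ _ (Nat.zero_le d)]
    exact Par.beta (ih₁ (d + 1)) (ih₂ d)

theorem Par.subst {M M' N N' : Lam} (hM : Par M M') (hN : Par N N') (i : ℕ) :
    Par (subst M i N) (subst M' i N') := by
  induction hM generalizing N N' i with
  | var n => simp only [Lam.subst]; split_ifs <;> first | exact hN | exact Par.refl _
  | app _ _ ih₁ ih₂ => exact Par.app (ih₁ hN i) (ih₂ hN i)
  | lam _ ih => exact Par.lam (ih (hN.lift 0) (i + 1))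
  | beta _ _ ih₁ ih₂ =>
    rw [subst_subst_of_le _ _ N' (Nat.zero_le i)]
    exact Par.beta (ih₁ (hN.lift 0) (i + 1)) (ih₂ hN i)

/-- Takahashi's complete development. -/
def cd : Lam → Lam
  | var n => var n
  | lam M => lam (cd M)
  | app (lam M) N => subst (cd M) 0 (cd N)
  | app M N => app (cd M) (cd N)

theorem Par.cd {M N : Lam} (h : Par M N) : Par N (cd M) := by
  induction h with
  | var n => exact Par.var n
  | lam _ ih => exact Par.lam ih
  | app h₁ _ ih₁ ih₂ =>
    cases h₁ with
    | lam => cases ih₁ with | lam ih₁ => exact Par.beta ih₁ ih₂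
    | _ => exact Par.app ih₁ ih₂
  | beta _ _ ih₁ ih₂ => exact Par.subst ih₁ ih₂ 0

theorem red_eq_reflTransGen_par : Red = Relation.ReflTransGen Par :=
  le_antisymm (Relation.ReflTransGen.mono fun _ _ => Par.of_step)
    (Relation.reflTransGen_closed fun _ _ => Par.red)

theorem Par.diamond {M N₁ N₂ : Lam} (h₁ : Par M N₁) (h₂ : Par M N₂) :
    ∃ Q, Relation.ReflGen Par N₁ Q ∧ Relation.ReflTransGen Par N₂ Q :=
  ⟨Lam.cd M, .single h₁.cd, .single h₂.cd⟩

theorem Red.confluent {M N₁ N₂ : Lam} (h₁ : Red M N₁) (h₂ : Red M N₂) :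
    Relation.Join Red N₁ N₂ := by
  rw [red_eq_reflTransGen_par] at *
  exact Relation.church_rosser (fun _ _ _ => Par.diamond) h₁ h₂

theorem BetaEq.join {M N : Lam} (h : BetaEq M N) : Relation.Join Red M N := by
  have hequiv : Equivalence (Relation.Join Red) := by
    rw [red_eq_reflTransGen_par]
    exact Relation.equivalence_join_reflTransGen fun _ _ _ => Par.diamond
  exact hequiv.eqvGen_iff.mp
    (Relation.EqvGen.mono (fun _ N h => ⟨N, Red.single h, Red.refl N⟩) _ _ h)

theorem Red.betaEq {M N : Lam} (h : Red M N) : BetaEq M N := by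
  induction h with
  | refl => exact Relation.EqvGen.refl _
  | tail _ hs ih => exact ih.trans _ _ _ (Relation.EqvGen.rel _ _ hs)

theorem BetaEq.appL {M M' : Lam} (N : Lam) (h : BetaEq M M') :
    BetaEq (app M N) (app M' N) := by
  induction h with
  | rel _ _ hs => exact Relation.EqvGen.rel _ _ (Step.appL N hs)
  | refl => exact Relation.EqvGen.refl _
  | symm _ _ _ ih => exact ih.symm
  | trans _ _ _ _ _ ih₁ ih₂ => exact ih₁.trans _ _ _ ih₂

theorem IsBetaNormal.not_step {M N : Lam} (hM : IsBetaNormal M) : ¬ Step M N := by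
  intro h
  induction h with
  | beta => exact hM
  | @appL M _ _ _ ih => cases M <;> simp_all [IsBetaNormal]
  | @appR M _ _ _ ih => cases M <;> simp_all [IsBetaNormal]
  | lam _ ih => exact ih hM

theorem IsBetaNormal.eq_of_red {M N : Lam} (hM : IsBetaNormal M) (h : Red M N) : N = M :=
  (Relation.reflTransGen_iff_eq fun _ => hM.not_step).mp h

theorem Red.red_of_red_of_isBetaNormal {M X N : Lam} (hX : Red M X) (hN : Red M N)
    (hnf : IsBetaNormal N) : Red X N := by
  obtain ⟨Q, hXQ, hNQ⟩ := hX.confluent hN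
  rwa [hnf.eq_of_red hNQ] at hXQ

theorem BetaEq.red_of_isBetaNormal {M N : Lam} (h : BetaEq M N) (hN : IsBetaNormal N) :
    Red M N := by
  obtain ⟨Q, hMQ, hNQ⟩ := h.join
  rwa [hN.eq_of_red hNQ] at hMQ

theorem isBetaNormal_sysA (n : ℕ) : IsBetaNormal (sysA n) := by
  induction n with
  | zero => simp [sysA, I, IsBetaNormal]
  | succ n ih => exact ih

theorem isBetaNormal_T : IsBetaNormal T := by simp [T, IsBetaNormal]

/-! ### Standardization -/

inductive WhStep : Lam → Lam → Prop
  | beta (A B : Lam) : WhStep (app (lam A) B) (subst A 0 B)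
  | app {M M' : Lam} (N : Lam) : WhStep M M' → WhStep (app M N) (app M' N)

def Whr : Lam → Lam → Prop := Relation.ReflTransGen WhStep

theorem WhStep.step {M N : Lam} (h : WhStep M N) : Step M N := by
  induction h with
  | beta A B => exact Step.beta A B
  | app N _ ih => exact Step.appL N ih

theorem Whr.red {M N : Lam} (h : Whr M N) : Red M N :=
  Relation.ReflTransGen.mono (fun _ _ => WhStep.step) _ _ h

theorem WhStep.subst {M M' : Lam} (h : WhStep M M') (n : ℕ) (N : Lam) :
    WhStep (subst M n N) (subst M' n N) := by
  induction h with
  | beta A B => rw [subst_subst_of_le A B N (Nat.zero_le n)]; exact WhStep.beta _ _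
  | app _ _ ih => exact WhStep.app _ ih

theorem WhStep.lift {M M' : Lam} (h : WhStep M M') (d : ℕ) : WhStep (lift d M) (lift d M') := by
  induction h with
  | beta A B => rw [lift_subst_of_ge A B (Nat.zero_le d)]; exact WhStep.beta _ _
  | app _ _ ih => exact WhStep.app _ ih

theorem Whr.subst {M M' : Lam} (h : Whr M M') (n : ℕ) (N : Lam) :
    Whr (subst M n N) (subst M' n N) :=
  Relation.ReflTransGen.lift (Lam.subst · n N) (fun _ _ hs => hs.subst n N) _ _ h

theorem Whr.lift {M M' : Lam} (h : Whr M M') (d : ℕ) : Whr (lift d M) (lift d M') :=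
  Relation.ReflTransGen.lift (Lam.lift d) (fun _ _ hs => hs.lift d) _ _ h

theorem Whr.appL {M M' : Lam} (h : Whr M M') (N : Lam) : Whr (app M N) (app M' N) :=
  Relation.ReflTransGen.lift (fun X => app X N) (fun _ _ => WhStep.app N) _ _ h

/-- Kashima's inductive characterisation of standard reduction. -/
inductive Hst : Lam → Lam → Prop
  | var {M : Lam} (i : ℕ) : Whr M (var i) → Hst M (var i)
  | app {M A B A' B' : Lam} : Whr M (app A B) → Hst A A' → Hst B B' → Hst M (app A' B')
  | lam {M A A' : Lam} : Whr M (lam A) → Hst A A' → Hst M (lam A')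

theorem Hst.refl (M : Lam) : Hst M M := by
  induction M with
  | var n => exact Hst.var n .refl
  | app A B ihA ihB => exact Hst.app .refl ihA ihB
  | lam A ih => exact Hst.lam .refl ih

theorem Hst.of_whr_of_hst {M N P : Lam} (h₁ : Whr M N) (h₂ : Hst N P) : Hst M P := by
  cases h₂ with
  | var i h => exact Hst.var i (h₁.trans h)
  | app h hA hB => exact Hst.app (h₁.trans h) hA hB
  | lam h hA => exact Hst.lam (h₁.trans h) hA

theorem Hst.lift {M N : Lam} (h : Hst M N) (d : ℕ) : Hst (lift d M) (lift d N) := by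
  induction h generalizing d with
  | var i h =>
    have hw := h.lift d
    simp only [Lam.lift] at hw ⊢
    split_ifs at hw ⊢ <;> exact Hst.var _ hw
  | app h _ _ ihA ihB => exact Hst.app (h.lift d) (ihA d) (ihB d)
  | lam h _ ihA => exact Hst.lam (h.lift d) (ihA (d + 1))

theorem Hst.subst {M N B B' : Lam} (h : Hst M N) (hB : Hst B B') (n : ℕ) :
    Hst (subst M n B) (subst N n B') := by
  induction h generalizing n B B' with
  | var i h =>
    have hw := h.subst n B
    by_cases hin : i = n
    · subst hin
      simp only [Lam.subst, if_true] at hw ⊢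
      exact Hst.of_whr_of_hst hw hB
    · simp only [Lam.subst, if_neg hin] at hw ⊢
      split_ifs at hw ⊢ <;> exact Hst.var _ hw
  | app h _ _ ihA ihB => exact Hst.app (h.subst n B) (ihA hB n) (ihB hB n)
  | lam h _ ihA => exact Hst.lam (h.subst n B) (ihA (hB.lift 0) (n + 1))

theorem Hst.tail {M N P : Lam} (h : Hst M N) (hs : Step N P) : Hst M P := by
  induction h generalizing P with
  | var i h => cases hs
  | app h hA hB ihA ihB =>
    cases hs with
    | beta =>
      cases hA with
      | lam hw hC =>
        exact Hst.of_whr_of_hst (h.trans ((hw.appL _).tail (WhStep.beta _ _))) (hC.subst hB 0)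
    | appL _ hs' => exact Hst.app h (ihA hs') hB
    | appR _ hs' => exact Hst.app h hA (ihB hs')
  | lam h _ ihA =>
    cases hs with
    | lam hs' => exact Hst.lam h (ihA hs')

theorem Red.hst {M N : Lam} (h : Red M N) : Hst M N := by
  induction h with
  | refl => exact Hst.refl M
  | tail _ hs ih => exact ih.tail hs

/-! ### Head normal forms -/

def lams : ℕ → Lam → Lam
  | 0, M => M
  | k + 1, M => lam (lams k M)

/-- `apps M [Nₖ, …, N₁]` is `M N₁ … Nₖ`: the list holds the arguments last one first. -/
def apps (M : Lam) : List Lam → Lam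
  | [] => M
  | N :: l => app (apps M l) N

theorem sysA_eq_lams (m : ℕ) : sysA m = lams (m + 1) (var 0) := by
  induction m with
  | zero => rfl
  | succ m ih => rw [sysA, ih]; rfl

theorem lams_sysA (k m : ℕ) : lams k (sysA m) = sysA (k + m) := by
  induction k with
  | zero => simp [lams]
  | succ k ih => rw [lams, ih, Nat.succ_add]; rfl

theorem apps_var_ne_lam (i : ℕ) (l : List Lam) (B : Lam) : apps (var i) l ≠ lam B := by
  cases l <;> simp [apps]

theorem lams_apps_var_eq_lams_var {k k' i j : ℕ} {l : List Lam}
    (h : lams k (apps (var i) l) = lams k' (var j)) : k = k' ∧ i = j := by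
  induction k generalizing k' with
  | zero =>
    cases k' with
    | zero => cases l <;> simp_all [lams, apps]
    | succ k' => exact absurd h (apps_var_ne_lam i l _)
  | succ k ih =>
    cases k' with
    | zero => simp [lams] at h
    | succ k' =>
      simp only [lams, lam.injEq] at h
      simpa using ih h

theorem sysA_injective : Function.Injective sysA := fun m n h => by
  rw [sysA_eq_lams, sysA_eq_lams] at h
  simpa using (lams_apps_var_eq_lams_var (l := []) h).1

theorem Red.lams {M N : Lam} (h : Red M N) (k : ℕ) : Red (lams k M) (lams k N) := by
  induction k with
  | zero => exact h
  | succ k ih => exact Red.lam ih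

theorem Red.apps_sysA {l : List Lam} {n : ℕ} (hn : l.length ≤ n) :
    Red (apps (sysA n) l) (sysA (n - l.length)) := by
  induction l with
  | nil => exact Red.refl _
  | cons N l ih =>
    have hl : l.length < n := by simpa using hn
    obtain ⟨m, hm⟩ : ∃ m, n - l.length = m + 1 := ⟨n - l.length - 1, by omega⟩
    have hstep : Step (app (Lam.lam (sysA m)) N) (sysA m) :=
      Step.beta_of_subst_eq (subst_sysA m 0 N)
    have hred : Red (apps (sysA n) l) (sysA (m + 1)) := hm ▸ ih hl.le
    rw [show n - (N :: l).length = m by simp only [List.length_cons]; omega]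
    exact (Red.appL N hred).trans (Red.single hstep)

theorem subst_lams {A : Lam} (hA : ∀ d, lift d A = A) (k : ℕ) (M : Lam) (n : ℕ) :
    subst (lams k M) n A = lams k (subst M (n + k) A) := by
  induction k generalizing n with
  | zero => rfl
  | succ k ih => simp only [lams, Lam.subst, hA, ih, Nat.add_right_comm n 1 k, Nat.add_assoc]

theorem subst_apps (M : Lam) (l : List Lam) (n : ℕ) (A : Lam) :
    subst (apps M l) n A = apps (subst M n A) (l.map (subst · n A)) := by
  induction l with
  | nil => rfl
  | cons N l ih => simp [apps, Lam.subst, ih]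

theorem Step.apps_var {i : ℕ} {l : List Lam} {X : Lam} (h : Step (apps (var i) l) X) :
    ∃ l', X = apps (var i) l' := by
  induction l generalizing X with
  | nil => cases h
  | cons N l ih =>
    simp only [apps] at h
    generalize hQ : apps (var i) l = Q at h
    cases h with
    | beta B _ => exact absurd hQ (apps_var_ne_lam i l B)
    | appL _ h => subst hQ; obtain ⟨l', rfl⟩ := ih h; exact ⟨N :: l', rfl⟩
    | appR _ h => subst hQ; exact ⟨_ :: l, rfl⟩

theorem Step.lams_apps_var {k i : ℕ} {l : List Lam} {X : Lam}
    (h : Step (lams k (apps (var i) l)) X) : ∃ l', X = lams k (apps (var i) l') := by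
  induction k generalizing X with
  | zero => exact h.apps_var
  | succ k ih =>
    cases h with
    | lam h => obtain ⟨l', rfl⟩ := ih h; exact ⟨l', rfl⟩

theorem Red.lams_apps_var {k i : ℕ} {l : List Lam} {X : Lam}
    (h : Red (Lam.lams k (apps (var i) l)) X) : ∃ l', X = Lam.lams k (apps (var i) l') := by
  induction h with
  | refl => exact ⟨l, rfl⟩
  | tail _ hs ih => obtain ⟨l', rfl⟩ := ih; exact hs.lams_apps_var

theorem WhStep.deterministic {M N₁ N₂ : Lam} (h₁ : WhStep M N₁) (h₂ : WhStep M N₂) :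
    N₁ = N₂ := by
  induction h₁ generalizing N₂ with
  | beta =>
    cases h₂ with
    | beta => rfl
    | app _ h => cases h
  | app _ h ih =>
    cases h₂ with
    | beta => cases h
    | app _ h' => rw [ih h']

theorem not_whStep_lam (B N : Lam) : ¬ WhStep (lam B) N := nofun

theorem not_whStep_apps_var (i : ℕ) (l : List Lam) (N : Lam) : ¬ WhStep (apps (var i) l) N := by
  induction l generalizing N with
  | nil => nofun
  | cons P l ih =>
    intro h
    simp only [apps] at h
    generalize hQ : apps (var i) l = Q at h
    cases h with
    | beta B _ => exact apps_var_ne_lam i l B hQ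
    | app _ h => exact ih _ (hQ ▸ h)

theorem exists_eq_lam_or_apps_var_of_whNormal {M : Lam} (h : ∀ N, ¬ WhStep M N) :
    (∃ B, M = lam B) ∨ ∃ i l, M = apps (var i) l := by
  induction M with
  | var i => exact .inr ⟨i, [], rfl⟩
  | lam B _ => exact .inl ⟨B, rfl⟩
  | app P Q ihP _ =>
    rcases ihP fun _ hP => h _ (WhStep.app Q hP) with ⟨B, rfl⟩ | ⟨i, l, rfl⟩
    · exact absurd (WhStep.beta B Q) (h _)
    · exact .inr ⟨i, Q :: l, rfl⟩

/-- Weak head reduction is deterministic and commutes with substitution, so it can be traced back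
from `M[n := A]` to `M` as long as the head of `M` is not the substituted variable. -/
theorem Whr.exists_whNormal_of_subst {M A N : Lam} {n : ℕ} (h : Whr (Lam.subst M n A) N)
    (hN : ∀ N', ¬ WhStep N N') :
    ∃ M', Whr M M' ∧ (∀ N', ¬ WhStep M' N') ∧ Whr (Lam.subst M' n A) N := by
  generalize hX : Lam.subst M n A = X at h
  induction h using Relation.ReflTransGen.head_induction_on generalizing M with
  | refl => exact ⟨M, .refl, fun _ hM => hN _ (hX ▸ hM.subst n A), hX ▸ .refl⟩
  | head hXY hYN ih =>
    by_cases hM : ∃ M₁, WhStep M M₁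
    · obtain ⟨M₁, hM₁⟩ := hM
      obtain ⟨M', hM', hnf, hw⟩ := ih ((hX ▸ hM₁.subst n A).deterministic hXY)
      exact ⟨M', .head hM₁ hM', hnf, hw⟩
    · simp only [not_exists] at hM
      exact ⟨M, .refl, hM, hX ▸ .head hXY hYN⟩

/-- `M` reaches a head normal form `λ…λ. x N₁ … Nₖ` by weak head reduction under
successive abstractions. -/
inductive HeadNormalizes : Lam → Prop
  | whr_apps {M : Lam} {i : ℕ} {l : List Lam} : Whr M (apps (var i) l) → HeadNormalizes M
  | whr_lam {M B : Lam} : Whr M (lam B) → HeadNormalizes B → HeadNormalizes M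

theorem Hst.whr_apps_var {M : Lam} {i : ℕ} {l : List Lam} (h : Hst M (apps (Lam.var i) l)) :
    ∃ l', Whr M (apps (Lam.var i) l') := by
  induction l generalizing M with
  | nil => cases h with | var _ h => exact ⟨[], h⟩
  | cons N l ih =>
    cases h with
    | app hw hA _ =>
      obtain ⟨l', hl'⟩ := ih hA
      exact ⟨_ :: l', hw.trans (hl'.appL _)⟩

theorem Hst.headNormalizes {M : Lam} {k i : ℕ} {l : List Lam}
    (h : Hst M (lams k (apps (Lam.var i) l))) : HeadNormalizes M := by
  induction k generalizing M with
  | zero => obtain ⟨l', hl'⟩ := h.whr_apps_var; exact .whr_apps hl'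
  | succ k ih => cases h with | lam hw hA => exact .whr_lam hw (ih hA)

theorem HeadNormalizes.of_subst {M A : Lam} {n : ℕ} (h : HeadNormalizes (subst M n A)) :
    HeadNormalizes M := by
  generalize hX : subst M n A = X at h
  induction h generalizing M n A with
  | whr_apps hw =>
    subst hX
    obtain ⟨M', hM', hnf, hw'⟩ := hw.exists_whNormal_of_subst (not_whStep_apps_var _ _)
    rcases exists_eq_lam_or_apps_var_of_whNormal hnf with ⟨C, rfl⟩ | ⟨j, l', rfl⟩
    · have := (Relation.reflTransGen_iff_eq (not_whStep_lam _)).mp hw'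
      exact absurd this (apps_var_ne_lam _ _ _)
    · exact .whr_apps hM'
  | whr_lam hw _ ih =>
    subst hX
    obtain ⟨M', hM', hnf, hw'⟩ := hw.exists_whNormal_of_subst (not_whStep_lam _)
    rcases exists_eq_lam_or_apps_var_of_whNormal hnf with ⟨C, rfl⟩ | ⟨j, l', rfl⟩
    · have hB := (Relation.reflTransGen_iff_eq (not_whStep_lam _)).mp hw'
      exact .whr_lam hM' (ih (lam.inj hB).symm)
    · exact .whr_apps hM'

theorem HeadNormalizes.exists_red {M : Lam} (h : HeadNormalizes M) :
    ∃ k i l, Red M (lams k (apps (var i) l)) := by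
  induction h with
  | whr_apps hw => exact ⟨0, _, _, hw.red⟩
  | whr_lam hw _ ih =>
    obtain ⟨k, i, l, h⟩ := ih
    exact ⟨k + 1, i, l, hw.red.trans (Red.lam h)⟩

theorem exists_red_hnf_of_red_subst {M A : Lam} {n k i : ℕ} {l : List Lam}
    (h : Red (subst M n A) (lams k (apps (var i) l))) :
    ∃ k i l, Red M (lams k (apps (var i) l)) :=
  h.hst.headNormalizes.of_subst.exists_red

theorem exists_red_hnf_app_var {G A : Lam} {k i : ℕ} {l : List Lam}
    (h : Red (app G A) (lams k (apps (var i) l))) :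
    ∃ k i l, Red (app (lift 0 G) (var 0)) (lams k (apps (var i) l)) :=
  exists_red_hnf_of_red_subst (n := 0) (A := A) (by simpa [Lam.subst] using h)

theorem red_app_sysA_of_red_app_var {G : Lam} {k i : ℕ} {l : List Lam}
    (h : Red (app (lift 0 G) (var 0)) (lams k (apps (var i) l))) (m : ℕ) :
    Red (app G (sysA m))
      (lams k (apps (subst (var i) k (sysA m)) (l.map (subst · k (sysA m))))) := by
  simpa [Lam.subst, subst_lams (lift_sysA · m), subst_apps] using h.subst 0 (sysA m)

theorem red_app_pair_T (M N : Lam) : Red (app (pair M N) T) M := by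
  have h₁ : Step (app (pair M N) T) (app (app T M) N) :=
    Step.beta_of_subst_eq (by simp [Lam.subst])
  have h₂ : Step (app T M) (lam (lift 0 M)) := Step.beta_of_subst_eq (by simp [Lam.subst])
  have h₃ : Step (app (lam (lift 0 M)) N) M := Step.beta_of_subst_eq (subst_lift M 0 N)
  exact (Red.single h₁).trans ((Red.appL N (Red.single h₂)).trans (Red.single h₃))

theorem sysA_not_zeroTest (G : Lam) (h₀ : BetaEq (app G (sysA 0)) T)
    (hs : ∀ n, BetaEq (app G (sysA (n + 1))) F) : False := by
  have hT : Red (app G (sysA 0)) T := h₀.red_of_isBetaNormal isBetaNormal_T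
  have hF n : Red (app G (sysA (n + 1))) F := (hs n).red_of_isBetaNormal (isBetaNormal_sysA 1)
  obtain ⟨k, i, l, hx⟩ := exists_red_hnf_app_var (k := 2) (i := 0) (l := []) (hF 0)
  have hG := red_app_sysA_of_red_app_var hx
  by_cases hik : i = k
  · subst hik
    have hred : Red (app G (sysA (l.length + 2))) (sysA (i + 2)) := by
      have hv : subst (var i) i (sysA (l.length + 2)) = sysA (l.length + 2) := by simp [Lam.subst]
      refine (hv ▸ hG _).trans ?_
      simpa [lams_sysA] using (Red.apps_sysA (l := l.map _) (n := l.length + 2) (by simp)).lams i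
    have hFA : sysA 1 = sysA (i + 2) := (isBetaNormal_sysA _).eq_of_red
      (hred.red_of_red_of_isBetaNormal (hF _) (isBetaNormal_sysA 1))
    exact absurd (sysA_injective hFA) (by omega)
  · obtain ⟨j, hj⟩ : ∃ j, ∀ A, subst (var i) k A = var j :=
      ⟨if k < i then i - 1 else i, fun A => by simp only [Lam.subst, if_neg hik]; split_ifs <;> rfl⟩
    have head m N (hN : Red (app G (sysA m)) N) (hnf : IsBetaNormal N) :
        ∃ l', N = lams k (apps (var j) l') := by
      have := (hG m).red_of_red_of_isBetaNormal hN hnf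
      rw [hj] at this
      exact this.lams_apps_var
    obtain ⟨l₁, h₁⟩ := head 0 T hT isBetaNormal_T
    obtain ⟨l₂, h₂⟩ := head 1 F (hF 0) (isBetaNormal_sysA 1)
    have hT' : lams k (apps (var j) l₁) = lams 2 (var 1) := h₁.symm
    have hF' : lams k (apps (var j) l₂) = lams 2 (var 0) := h₂.symm
    exact absurd ((lams_apps_var_eq_lams_var hT').2.symm.trans (lams_apps_var_eq_lams_var hF').2)
      (by decide)

theorem sysB'_not_successor (S : Lam) (h : ∀ n, BetaEq (app S (sysB' n)) (sysB' (n + 1))) :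
    False := by
  let G := lam (app (app (lift 0 S) (pair (lift 0 F) (var 0))) (lift 0 T))
  have hstep n : Step (app G (sysA n)) (app (app S (sysB (n + 1))) T) :=
    Step.beta_of_subst_eq (by simp [Lam.subst, subst_pair, sysB])
  refine sysA_not_zeroTest G ?_ fun n => ?_
  · exact (Red.single (hstep 0)).betaEq.trans _ _ _
      (((h 0).appL T).trans _ _ _ (red_app_pair_T _ _).betaEq)
  · exact (Red.single (hstep (n + 1))).betaEq.trans _ _ _
      (((h (n + 2)).appL T).trans _ _ _ (red_app_pair_T _ _).betaEq)

theorem sysB'_not_predecessor (P : Lam) (h : ∀ n, BetaEq (app P (sysB' (n + 1))) (sysB' n)) :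
    False := by
  let G := lam (app (app (lift 0 P) (pair (lift 0 F) (lam (var 1)))) (lift 0 T))
  have hstep n : Step (app G (sysA n)) (app (app P (sysB (n + 2))) T) :=
    Step.beta_of_subst_eq (by simp [Lam.subst, subst_pair, sysB, sysA])
  refine sysA_not_zeroTest G ?_ fun n => ?_
  · exact (Red.single (hstep 0)).betaEq.trans _ _ _
      (((h 1).appL T).trans _ _ _ (red_app_pair_T _ _).betaEq)
  · exact (Red.single (hstep (n + 1))).betaEq.trans _ _ _
      (((h (n + 2)).appL T).trans _ _ _ (red_app_pair_T _ _).betaEq)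

theorem sysB'_not_zeroTest (Z : Lam) (h₀ : BetaEq (app Z (sysB' 0)) T)
    (hs : ∀ n, BetaEq (app Z (sysB' (n + 1))) F) : False := by
  let G := lam (app (lift 0 Z) (pair (lift 0 F) (var 0)))
  have hstep n : Step (app G (sysA n)) (app Z (sysB (n + 1))) :=
    Step.beta_of_subst_eq (by simp [Lam.subst, subst_pair, sysB])
  exact sysA_not_zeroTest G ((Red.single (hstep 0)).betaEq.trans _ _ _ h₀)
    fun n => (Red.single (hstep (n + 1))).betaEq.trans _ _ _ (hs (n + 1))

end Lam

/-- The numeral system `b′` (`b′₀ = b₁`, `b′₁ = b₀`, `b′ₙ = bₙ` for `n ≥ 2`) possesses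
no closed λ-term for Successor, none for Predecessor and none for Zero Test. -/
theorem statement6 :
    (¬ ∃ S, Lam.Closed S ∧ ∀ n, Lam.BetaEq (Lam.app S (Lam.sysB' n)) (Lam.sysB' (n + 1))) ∧
    (¬ ∃ P, Lam.Closed P ∧ ∀ n, Lam.BetaEq (Lam.app P (Lam.sysB' (n + 1))) (Lam.sysB' n)) ∧
    (¬ ∃ Z, Lam.Closed Z ∧ Lam.BetaEq (Lam.app Z (Lam.sysB' 0)) Lam.T ∧
        ∀ n, Lam.BetaEq (Lam.app Z (Lam.sysB' (n + 1))) Lam.F) :=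
  ⟨fun ⟨S, _, hS⟩ => Lam.sysB'_not_successor S hS,
    fun ⟨P, _, hP⟩ => Lam.sysB'_not_predecessor P hP,
    fun ⟨Z, _, h₀, hs⟩ => Lam.sysB'_not_zeroTest Z h₀ hs⟩
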